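/- arXiv:1202.4853 — 2 statements merged into one kernel-verified Lean document; each statement's English description precedes it below -/
import Mathlib

section
/- Let ν ≥ 1/2 be real. Then for all x > 0, the Turánian of the modified Bessel function of the first kind satisfies the upper bound I_ν(x)² − I_{ν−1}(x)·I_{ν+1}(x) < I_ν(x)² / √(x² + ν² − 1/4). -/
/-!
Write `I = I_ν`, `r = √(x² + ν² - 1/4)` and `φ = √(x² + ν² - x² / r)`. With the recurrence
`I_{ν-1} = I_{ν+1} + (2ν/x) I_ν` and `x I' = x I_{ν+1} + ν I`, `x²` times the Turánian equals
`(x² + ν²) I² - (x I')²`, so the bound is equivalent to `φ I < x I'`.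

For `ν > 1/2` put `V = x I I' - φ I²`. Bessel's equation gives
`V' = x (I' - φ I / x)² + I² (x / r - φ')`, and `φ' < x / r` is an algebraic inequality, so `V`
increases strictly from `V(0+) = 0`. For `ν = 1/2` one has `φ = |x - 1/2|`, which is not
differentiable at `1/2`; the same `V` built with `x - 1/2` has `V' ≥ 0` and is visibly positive
on `(0, 1]`, while the bound with `1/2 - x` is immediate.
-/

open Real

/-- The modified Bessel function of the first kind of real order `ν`,
`I_ν(x) = ∑_{n≥0} (x/2)^(2n+ν) / (n! Γ(n+ν+1))`. -/
noncomputable def besselI (ν x : ℝ) : ℝ :=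
  ∑' n : ℕ, (x / 2) ^ (2 * (n : ℝ) + ν) / ((n.factorial : ℝ) * Real.Gamma ((n : ℝ) + ν + 1))

/-- The modified Bessel function of the second kind of real order `ν`,
`K_ν(x) = ∫_0^∞ e^{-x cosh t} cosh(ν t) dt`. -/
noncomputable def besselK (ν x : ℝ) : ℝ :=
  ∫ t in Set.Ioi (0 : ℝ), Real.exp (-x * Real.cosh t) * Real.cosh (ν * t)

open Filter Topology Set

noncomputable def besselITerm (ν : ℝ) (n : ℕ) (x : ℝ) : ℝ :=
  (x / 2) ^ (2 * (n : ℝ) + ν) / ((n.factorial : ℝ) * Real.Gamma ((n : ℝ) + ν + 1))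

namespace besselITerm

variable {ν x : ℝ}

lemma denom_pos (hν : -1 < ν) (n : ℕ) :
    0 < (n.factorial : ℝ) * Real.Gamma ((n : ℝ) + ν + 1) :=
  mul_pos (by positivity) (Real.Gamma_pos_of_pos (by linarith [n.cast_nonneg (α := ℝ)]))

lemma pos (hν : -1 < ν) (hx : 0 < x) (n : ℕ) : 0 < besselITerm ν n x :=
  div_pos (Real.rpow_pos_of_pos (by positivity) _) (denom_pos hν n)

lemma succ_eq (hν : -1 < ν) (hx : 0 < x) (n : ℕ) :
    besselITerm ν (n + 1) x =
      besselITerm ν n x * ((x / 2) ^ 2 / (((n : ℝ) + 1) * ((n : ℝ) + ν + 1))) := by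
  have hpow : (x / 2) ^ (2 * ((n : ℝ) + 1) + ν) =
      (x / 2) ^ (2 * (n : ℝ) + ν) * (x / 2) ^ 2 := by
    rw [show 2 * ((n : ℝ) + 1) + ν = 2 * n + ν + (2 : ℕ) by push_cast; ring,
      Real.rpow_add (by positivity), Real.rpow_natCast]
  have hn : 0 < (n : ℝ) + ν + 1 := by linarith [n.cast_nonneg (α := ℝ)]
  have hΓ : Real.Gamma ((n : ℝ) + 1 + ν + 1) = (n + ν + 1) * Real.Gamma (n + ν + 1) := by
    rw [show (n : ℝ) + 1 + ν + 1 = (n + ν + 1) + 1 by ring, Real.Gamma_add_one hn.ne']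
  have := denom_pos hν n
  simp only [besselITerm, Nat.cast_succ, Nat.factorial_succ, Nat.cast_mul, hpow, hΓ]
  field_simp

lemma mul_succ_eq (hν : -1 < ν) (hx : 0 < x) (n : ℕ) :
    2 * ((n : ℝ) + 1) / x * besselITerm ν (n + 1) x = besselITerm (ν + 1) n x := by
  have hpow : (x / 2) ^ (2 * ((n : ℝ) + 1) + ν) =
      (x / 2) ^ (2 * (n : ℝ) + (ν + 1)) * (x / 2) := by
    rw [show 2 * ((n : ℝ) + 1) + ν = 2 * n + (ν + 1) + 1 by ring,
      Real.rpow_add (by positivity), Real.rpow_one]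
  have := denom_pos (show -1 < ν + 1 by linarith) n
  simp only [besselITerm, Nat.cast_succ, Nat.factorial_succ, Nat.cast_mul, hpow,
    show (n : ℝ) + 1 + ν + 1 = n + (ν + 1) + 1 by ring]
  field_simp

lemma summable (hν : -1 < ν) (hx : 0 < x) : Summable (besselITerm ν · x) := by
  refine summable_of_ratio_norm_eventually_le (r := 1 / 2) (by norm_num) ?_
  filter_upwards [eventually_ge_atTop ⌈2 * (x / 2) ^ 2⌉₊] with n hn
  have hn' : 2 * (x / 2) ^ 2 ≤ (n : ℝ) := (Nat.ceil_le).mp hn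
  have h := pos hν hx n
  rw [Real.norm_of_nonneg (pos hν hx (n + 1)).le, Real.norm_of_nonneg h.le, succ_eq hν hx n,
    mul_comm (1 / 2)]
  refine mul_le_mul_of_nonneg_left ?_ h.le
  rw [div_le_iff₀ (by nlinarith)]
  nlinarith

lemma summable_two_mul_div (hν : -1 < ν) (hx : 0 < x) :
    Summable fun n : ℕ => 2 * (n : ℝ) / x * besselITerm ν n x := by
  refine (summable_nat_add_iff 1).mp ?_
  simpa only [Nat.cast_succ, mul_succ_eq hν hx] using summable (show -1 < ν + 1 by linarith) hx

lemma tsum_two_mul_div (hν : -1 < ν) (hx : 0 < x) :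
    ∑' n : ℕ, 2 * (n : ℝ) / x * besselITerm ν n x = besselI (ν + 1) x := by
  rw [(summable_two_mul_div hν hx).tsum_eq_zero_add]
  simp only [Nat.cast_zero, mul_zero, zero_div, zero_mul, zero_add, Nat.cast_succ,
    mul_succ_eq hν hx]
  rfl

lemma summable_linear_mul (hν : -1 < ν) (hx : 0 < x) (c : ℝ) :
    Summable fun n : ℕ => (2 * (n : ℝ) + c) * besselITerm ν n x :=
  (((summable_two_mul_div hν hx).mul_left x).add ((summable hν hx).mul_left c)).congr fun n => by
    field_simp

lemma hasDerivAt (hx : 0 < x) (n : ℕ) :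
    HasDerivAt (besselITerm ν n) ((2 * (n : ℝ) + ν) / x * besselITerm ν n x) x := by
  have h := (((hasDerivAt_id x).div_const 2).rpow_const (p := 2 * (n : ℝ) + ν)
    (Or.inl (by positivity))).div_const ((n.factorial : ℝ) * Real.Gamma ((n : ℝ) + ν + 1))
  refine h.congr_deriv ?_
  rw [Real.rpow_sub (by positivity), Real.rpow_one]
  simp only [besselITerm, id]
  field_simp

lemma le_add_of_mem_Icc (hν : -1 < ν) (n : ℕ) {a b y : ℝ} (ha : 0 < a) (hy : y ∈ Icc a b) :
    besselITerm ν n y ≤ besselITerm ν n a + besselITerm ν n b := by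
  have hya : 0 < y := ha.trans_le hy.1
  have hpow : (y / 2) ^ (2 * (n : ℝ) + ν) ≤
      (a / 2) ^ (2 * (n : ℝ) + ν) + (b / 2) ^ (2 * (n : ℝ) + ν) := by
    have hpa : 0 < (a / 2) ^ (2 * (n : ℝ) + ν) := Real.rpow_pos_of_pos (by linarith) _
    have hpb : 0 < (b / 2) ^ (2 * (n : ℝ) + ν) := Real.rpow_pos_of_pos (by linarith [hy.2]) _
    rcases le_or_gt 0 (2 * (n : ℝ) + ν) with hp | hp
    · have : (y / 2) ^ (2 * (n : ℝ) + ν) ≤ (b / 2) ^ (2 * (n : ℝ) + ν) :=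
        Real.rpow_le_rpow (by linarith) (by linarith [hy.2]) hp
      linarith
    · have : (y / 2) ^ (2 * (n : ℝ) + ν) ≤ (a / 2) ^ (2 * (n : ℝ) + ν) :=
        Real.rpow_le_rpow_of_nonpos (by linarith) (by linarith [hy.1]) hp.le
      linarith
  rw [besselITerm, besselITerm, besselITerm, ← add_div]
  exact div_le_div_of_nonneg_right hpow (denom_pos hν n).le

lemma sub_one (hν : 0 < ν) (hx : 0 < x) (n : ℕ) :
    besselITerm (ν - 1) n x =
      2 * (n : ℝ) / x * besselITerm ν n x + 2 * ν / x * besselITerm ν n x := by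
  have hpow : (x / 2) ^ (2 * (n : ℝ) + ν) = (x / 2) ^ (2 * (n : ℝ) + (ν - 1)) * (x / 2) := by
    rw [show 2 * (n : ℝ) + ν = 2 * n + (ν - 1) + 1 by ring, Real.rpow_add (by positivity),
      Real.rpow_one]
  have hΓ : Real.Gamma ((n : ℝ) + ν + 1) = ((n : ℝ) + ν) * Real.Gamma ((n : ℝ) + ν) := by
    rw [show (n : ℝ) + ν + 1 = (n + ν) + 1 by ring, Real.Gamma_add_one (by positivity)]
  have : 0 < Real.Gamma ((n : ℝ) + ν) := Real.Gamma_pos_of_pos (by positivity)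
  simp only [besselITerm, hpow, hΓ, show (n : ℝ) + (ν - 1) + 1 = n + ν by ring]
  field_simp

end besselITerm

variable {ν x y : ℝ}

lemma besselI_eq_tsum (ν x : ℝ) : besselI ν x = ∑' n, besselITerm ν n x := rfl

lemma besselI_pos (hν : -1 < ν) (hx : 0 < x) : 0 < besselI ν x :=
  (besselITerm.summable hν hx).tsum_pos (fun n => (besselITerm.pos hν hx n).le) 0
    (besselITerm.pos hν hx 0)

lemma hasDerivAt_besselI (hν : -1 < ν) (hx : 0 < x) :
    HasDerivAt (besselI ν) (besselI (ν + 1) x + ν / x * besselI ν x) x := by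
  have hx2 : 0 < x / 2 := by positivity
  have hb : 0 < 2 * x + 1 := by positivity
  have hmem : x ∈ Ioo (x / 2) (2 * x + 1) := ⟨by linarith, by linarith⟩
  have key : HasDerivAt (besselI ν)
      (∑' n : ℕ, (2 * (n : ℝ) + ν) / x * besselITerm ν n x) x := by
    refine hasDerivAt_tsum_of_isPreconnected (t := Ioo (x / 2) (2 * x + 1))
      (u := fun n : ℕ => (2 / x) * ((2 * (n : ℝ) + |ν|) * besselITerm ν n (x / 2) +
        (2 * (n : ℝ) + |ν|) * besselITerm ν n (2 * x + 1)))
      (((besselITerm.summable_linear_mul hν hx2 _).add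
        (besselITerm.summable_linear_mul hν hb _)).mul_left _) isOpen_Ioo
      (convex_Ioo _ _).isPreconnected
      (fun n y hy => besselITerm.hasDerivAt (hx2.trans hy.1) n) ?_ hmem
      (besselITerm.summable hν hx) hmem
    intro n y hy
    have hy0 : 0 < y := hx2.trans hy.1
    have habs : |2 * (n : ℝ) + ν| ≤ 2 * n + |ν| :=
      (abs_add_le _ _).trans_eq (by rw [abs_of_nonneg (by positivity : (0 : ℝ) ≤ 2 * n)])
    have hcoef : |2 * (n : ℝ) + ν| / y ≤ 2 / x * (2 * n + |ν|) :=
      calc |2 * (n : ℝ) + ν| / y ≤ (2 * n + |ν|) / (x / 2) :=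
            div_le_div₀ (by positivity) habs hx2 hy.1.le
        _ = 2 / x * (2 * n + |ν|) := by field_simp
    rw [norm_mul, Real.norm_eq_abs, Real.norm_of_nonneg (besselITerm.pos hν hy0 n).le, abs_div,
      abs_of_pos hy0, ← mul_add, ← mul_assoc]
    exact mul_le_mul hcoef (besselITerm.le_add_of_mem_Icc hν n hx2 (Ioo_subset_Icc_self hy))
      (besselITerm.pos hν hy0 n).le (by positivity)
  convert key using 1
  rw [← besselITerm.tsum_two_mul_div hν hx, besselI_eq_tsum, ← tsum_mul_left,
    ← (besselITerm.summable_two_mul_div hν hx).tsum_add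
      ((besselITerm.summable hν hx).mul_left _)]
  congr 1 with n
  ring

lemma besselI_sub_one (hν : 0 < ν) (hx : 0 < x) :
    besselI (ν - 1) x = besselI (ν + 1) x + 2 * ν / x * besselI ν x := by
  have hν' : -1 < ν := by linarith
  rw [besselI_eq_tsum, tsum_congr (besselITerm.sub_one hν hx),
    (besselITerm.summable_two_mul_div hν' hx).tsum_add ((besselITerm.summable hν' hx).mul_left _),
    besselITerm.tsum_two_mul_div hν' hx, tsum_mul_left]
  rfl

lemma tendsto_besselI_nhdsGT_zero (hν : 0 < ν) : Tendsto (besselI ν) (𝓝[>] 0) (𝓝 0) := by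
  have hterm (n : ℕ) : Tendsto (besselITerm ν n) (𝓝[>] 0) (𝓝 0) := by
    have hcont : Continuous (besselITerm ν n) :=
      ((continuous_id.div_const 2).rpow_const fun _ => Or.inr (by positivity)).div_const _
    have hzero : besselITerm ν n 0 = 0 := by
      simp [besselITerm, Real.zero_rpow (by positivity : 2 * (n : ℝ) + ν ≠ 0)]
    exact (hcont.tendsto' 0 0 hzero).mono_left nhdsWithin_le_nhds
  have hbound : ∀ᶠ y in 𝓝[>] 0, ∀ n, ‖besselITerm ν n y‖ ≤ besselITerm ν n 1 := by
    filter_upwards [Ioc_mem_nhdsGT one_pos] with y hy n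
    rw [Real.norm_of_nonneg (besselITerm.pos (by linarith) hy.1 n).le]
    exact div_le_div_of_nonneg_right (Real.rpow_le_rpow (by linarith [hy.1])
      (by linarith [hy.2]) (by positivity)) (besselITerm.denom_pos (by linarith) n).le
  have h := tendsto_tsum_of_dominated_convergence (besselITerm.summable (by linarith) one_pos)
    hterm hbound
  rwa [tsum_zero] at h

lemma deriv_besselI (hν : -1 < ν) (hx : 0 < x) :
    deriv (besselI ν) x = besselI (ν + 1) x + ν / x * besselI ν x :=
  (hasDerivAt_besselI hν hx).deriv

lemma mul_deriv_besselI (hν : -1 < ν) (hx : 0 < x) :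
    x * deriv (besselI ν) x = x * besselI (ν + 1) x + ν * besselI ν x := by
  rw [deriv_besselI hν hx]
  field_simp

/-- Bessel's modified differential equation `x² I'' + x I' - (x² + ν²) I = 0`. -/
lemma hasDerivAt_deriv_besselI (hν : -1 < ν) (hx : 0 < x) :
    HasDerivAt (deriv (besselI ν))
      ((1 + ν ^ 2 / x ^ 2) * besselI ν x - deriv (besselI ν) x / x) x := by
  have hν1 : -1 < ν + 1 := by linarith
  have heq : deriv (besselI ν) =ᶠ[𝓝 x] fun y => besselI (ν + 1) y + ν / y * besselI ν y :=
    eventually_of_mem (Ioi_mem_nhds hx) fun y hy => deriv_besselI hν hy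
  have hrec := besselI_sub_one (show 0 < ν + 1 by linarith) hx
  rw [add_sub_cancel_right, add_assoc, one_add_one_eq_two] at hrec
  refine (((hasDerivAt_besselI hν1 hx).add ((hasDerivAt_inv hx.ne').const_mul ν |>.mul
    (hasDerivAt_besselI hν hx))).congr_of_eventuallyEq heq).congr_deriv ?_
  rw [deriv_besselI hν hx, add_assoc ν 1 1, one_add_one_eq_two, hrec]
  field_simp
  ring

/-- Equals `I_ν(y)² (y I_ν'(y) / I_ν(y) - ψ y)`. -/
noncomputable def besselLyapunov (ν : ℝ) (ψ : ℝ → ℝ) (y : ℝ) : ℝ :=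
  y * besselI ν y * deriv (besselI ν) y - ψ y * besselI ν y ^ 2

lemma hasDerivAt_besselLyapunov {ψ : ℝ → ℝ} {ψ' : ℝ} (hν : -1 < ν) (hy : 0 < y)
    (hψ : HasDerivAt ψ ψ' y) :
    HasDerivAt (besselLyapunov ν ψ)
      (y * (deriv (besselI ν) y - ψ y / y * besselI ν y) ^ 2 +
        besselI ν y ^ 2 * ((y ^ 2 + ν ^ 2 - ψ y ^ 2) / y - ψ')) y := by
  have hI := hasDerivAt_besselI hν hy
  rw [← deriv_besselI hν hy] at hI
  refine (((hasDerivAt_id y).mul hI).mul (hasDerivAt_deriv_besselI hν hy) |>.sub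
    (hψ.mul (hI.pow 2))).congr_deriv ?_
  simp only [id, Pi.mul_apply, Pi.pow_apply]
  field_simp
  ring

lemma besselLyapunov_pos_iff {ψ : ℝ → ℝ} (hν : -1 < ν) (hx : 0 < x) :
    0 < besselLyapunov ν ψ x ↔ ψ x * besselI ν x < x * deriv (besselI ν) x := by
  have hI := besselI_pos hν hx
  rw [besselLyapunov, show x * besselI ν x * deriv (besselI ν) x - ψ x * besselI ν x ^ 2 =
    besselI ν x * (x * deriv (besselI ν) x - ψ x * besselI ν x) by ring,
    mul_pos_iff_of_pos_left hI, sub_pos]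

lemma besselLyapunov_half_monotoneOn :
    MonotoneOn (besselLyapunov (1 / 2) (· - 1 / 2)) (Ioi 0) := by
  have hderiv (y : ℝ) (hy : y ∈ Ioi (0 : ℝ)) := hasDerivAt_besselLyapunov (ν := 1 / 2)
    (by norm_num) hy (((hasDerivAt_id y).sub_const (1 / 2 : ℝ)))
  refine monotoneOn_of_hasDerivWithinAt_nonneg (convex_Ioi 0)
    (fun y hy => (hderiv y hy).continuousAt.continuousWithinAt)
    (fun y hy => (hderiv y (interior_subset hy)).hasDerivWithinAt) fun y hy => ?_
  rw [interior_Ioi] at hy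
  have hy0 : (0 : ℝ) < y := hy
  have hzero : (y ^ 2 + (1 / 2 : ℝ) ^ 2 - (id y - 1 / 2) ^ 2) / y - 1 = 0 := by
    field_simp
    simp only [id]
    ring
  rw [hzero, mul_zero, add_zero]
  positivity

lemma besselLyapunov_half_pos (hx : 0 < x) : 0 < besselLyapunov (1 / 2) (· - 1 / 2) x := by
  have hpos {y : ℝ} (hy : 0 < y) (hy1 : y ≤ 1) : 0 < besselLyapunov (1 / 2) (· - 1 / 2) y := by
    have hI := besselI_pos (ν := 1 / 2) (by norm_num) hy
    have hJ := besselI_pos (ν := 1 / 2 + 1) (by norm_num) hy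
    have hV : besselLyapunov (1 / 2) (· - 1 / 2) y =
        y * besselI (1 / 2) y * besselI (1 / 2 + 1) y + (1 - y) * besselI (1 / 2) y ^ 2 := by
      rw [besselLyapunov, deriv_besselI (by norm_num) hy]
      field_simp
      ring
    rw [hV]
    have := mul_pos (mul_pos hy hI) hJ
    nlinarith [sq_nonneg (besselI (1 / 2) y)]
  rcases le_or_gt x 1 with hx1 | hx1
  · exact hpos hx hx1
  · exact (hpos one_pos le_rfl).trans_le
      (besselLyapunov_half_monotoneOn (mem_Ioi.mpr one_pos) (mem_Ioi.mpr hx) hx1.le)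

noncomputable def turanPhi (ν y : ℝ) : ℝ :=
  √(y ^ 2 + ν ^ 2 - y ^ 2 / √(y ^ 2 + ν ^ 2 - 1 / 4))

lemma turanPhi_radicand_pos (hν : 1 / 2 < ν) (hy : 0 < y) :
    0 < y ^ 2 + ν ^ 2 - y ^ 2 / √(y ^ 2 + ν ^ 2 - 1 / 4) := by
  have hr : y < √(y ^ 2 + ν ^ 2 - 1 / 4) := Real.lt_sqrt_of_sq_lt (by nlinarith)
  have : y ^ 2 / √(y ^ 2 + ν ^ 2 - 1 / 4) < y := by
    rw [div_lt_iff₀ (hy.trans hr)]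
    nlinarith
  nlinarith [sq_nonneg (y - 1 / 2)]

lemma turanPhi_half (hy : 0 < y) : turanPhi (1 / 2) y = |y - 1 / 2| := by
  rw [turanPhi, show y ^ 2 + (1 / 2 : ℝ) ^ 2 - 1 / 4 = y ^ 2 by ring, Real.sqrt_sq hy.le,
    ← Real.sqrt_sq_eq_abs]
  congr 1
  field_simp
  ring

lemma turanPhi_sq (hν : 1 / 2 ≤ ν) (hy : 0 < y) :
    turanPhi ν y ^ 2 = y ^ 2 + ν ^ 2 - y ^ 2 / √(y ^ 2 + ν ^ 2 - 1 / 4) := by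
  rcases hν.eq_or_lt with rfl | hν
  · rw [turanPhi_half hy, sq_abs, show y ^ 2 + (1 / 2 : ℝ) ^ 2 - 1 / 4 = y ^ 2 by ring,
      Real.sqrt_sq hy.le]
    field_simp
    ring
  · exact Real.sq_sqrt (turanPhi_radicand_pos hν hy).le

/-- The bound `turanPhi' < y / r` cleared of denominators, with `r = √(y² + ν² - 1/4)`,
`c = ν² - 1/4` and `p = turanPhi ν y`. -/
lemma two_mul_cube_sub_lt {r c p : ℝ} (hr : 0 < r) (hc : 0 < c) (hp : 0 < p)
    (h : p ^ 2 * r = r ^ 3 + r / 4 - r ^ 2 + c) : 2 * r ^ 3 - r ^ 2 - c < 2 * p * r ^ 2 := by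
  rcases le_or_gt (2 * r ^ 3 - r ^ 2 - c) 0 with hK | hK
  · nlinarith [mul_pos hp (mul_pos hr hr)]
  · have hsq : (2 * p * r ^ 2) ^ 2 - (2 * r ^ 3 - r ^ 2 - c) ^ 2 =
        c * (8 * r ^ 3 - 2 * r ^ 2 - c) := by
      linear_combination 4 * r ^ 3 * h
    have : 0 < c * (8 * r ^ 3 - 2 * r ^ 2 - c) := mul_pos hc (by nlinarith)
    nlinarith [mul_pos hp (mul_pos hr hr)]

lemma exists_hasDerivAt_turanPhi_lt (hν : 1 / 2 < ν) (hy : 0 < y) :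
    ∃ φ', HasDerivAt (turanPhi ν) φ' y ∧ φ' < y / √(y ^ 2 + ν ^ 2 - 1 / 4) := by
  have hc : 0 < ν ^ 2 - 1 / 4 := by nlinarith
  have hq : 0 < y ^ 2 + ν ^ 2 - 1 / 4 := by nlinarith
  set r := √(y ^ 2 + ν ^ 2 - 1 / 4) with hr_def
  have hr : 0 < r := Real.sqrt_pos.mpr hq
  have hr2 : r ^ 2 = y ^ 2 + ν ^ 2 - 1 / 4 := Real.sq_sqrt hq.le
  have hp : 0 < turanPhi ν y := Real.sqrt_pos.mpr (turanPhi_radicand_pos hν hy)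
  have hp2 := turanPhi_sq hν.le hy
  rw [← hr_def] at hp2
  have hsq : HasDerivAt (fun z : ℝ => z ^ 2) (2 * y) y := by simpa using hasDerivAt_pow 2 y
  have hdr : HasDerivAt (fun z => √(z ^ 2 + ν ^ 2 - 1 / 4)) (y / r) y := by
    refine ((hsq.add_const _).sub_const _).sqrt hq.ne' |>.congr_deriv ?_
    rw [← hr_def]
    field_simp
  refine ⟨_, ((hsq.add_const _).sub (hsq.div hdr hr.ne')).sqrt
    (turanPhi_radicand_pos hν hy).ne', ?_⟩
  show (2 * y - (2 * y * r - y ^ 2 * (y / r)) / r ^ 2) / (2 * turanPhi ν y) < y / r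
  have hrel : turanPhi ν y ^ 2 * r = r ^ 3 + r / 4 - r ^ 2 + (ν ^ 2 - 1 / 4) := by
    rw [hp2, sub_mul, div_mul_cancel₀ _ hr.ne']
    linear_combination (1 - r) * hr2
  have key := two_mul_cube_sub_lt hr hc hp hrel
  have hnum : (2 * y - (2 * y * r - y ^ 2 * (y / r)) / r ^ 2) * r =
      y * (2 * r ^ 3 - r ^ 2 - (ν ^ 2 - 1 / 4)) / r ^ 2 := by
    field_simp
    linear_combination (-4) * hr2
  rw [div_lt_div_iff₀ (by positivity) hr, hnum, div_lt_iff₀ (by positivity)]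
  nlinarith [mul_lt_mul_of_pos_left key hy]

lemma besselLyapunov_turanPhi_strictMonoOn (hν : 1 / 2 < ν) :
    StrictMonoOn (besselLyapunov ν (turanPhi ν)) (Ioi 0) := by
  have hderiv (y : ℝ) (hy : 0 < y) :
      ∃ V', HasDerivAt (besselLyapunov ν (turanPhi ν)) V' y ∧ 0 < V' := by
    obtain ⟨φ', hφ', hφ'_lt⟩ := exists_hasDerivAt_turanPhi_lt hν hy
    refine ⟨_, hasDerivAt_besselLyapunov (by linarith) hy hφ', ?_⟩
    have hr : 0 < √(y ^ 2 + ν ^ 2 - 1 / 4) := Real.sqrt_pos.mpr (by nlinarith)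
    have hcoef : (y ^ 2 + ν ^ 2 - turanPhi ν y ^ 2) / y = y / √(y ^ 2 + ν ^ 2 - 1 / 4) := by
      rw [turanPhi_sq hν.le hy, sub_sub_cancel]
      field_simp
    rw [hcoef]
    have := besselI_pos (show -1 < ν by linarith) hy
    have : 0 < besselI ν y ^ 2 * (y / √(y ^ 2 + ν ^ 2 - 1 / 4) - φ') :=
      mul_pos (by positivity) (sub_pos.mpr hφ'_lt)
    positivity
  refine strictMonoOn_of_deriv_pos (convex_Ioi 0) (fun y hy => ?_) fun y hy => ?_
  · obtain ⟨V', hV', -⟩ := hderiv y hy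
    exact hV'.continuousAt.continuousWithinAt
  · rw [interior_Ioi] at hy
    obtain ⟨V', hV', hpos⟩ := hderiv y hy
    rwa [hV'.deriv]

lemma tendsto_besselLyapunov_turanPhi (hν : 1 / 2 < ν) :
    Tendsto (besselLyapunov ν (turanPhi ν)) (𝓝[>] 0) (𝓝 0) := by
  have hI := tendsto_besselI_nhdsGT_zero (show 0 < ν by linarith)
  have hJ := tendsto_besselI_nhdsGT_zero (show 0 < ν + 1 by linarith)
  have hφ : ContinuousAt (turanPhi ν) 0 := by
    unfold turanPhi
    fun_prop (disch := exact (Real.sqrt_pos.mpr (by nlinarith)).ne')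
  have hid : Tendsto (fun y : ℝ => y) (𝓝[>] 0) (𝓝 0) := nhdsWithin_le_nhds
  have heq : besselLyapunov ν (turanPhi ν) =ᶠ[𝓝[>] 0]
      fun y => (y * besselI (ν + 1) y + ν * besselI ν y) * besselI ν y -
        turanPhi ν y * besselI ν y ^ 2 := by
    filter_upwards [self_mem_nhdsWithin] with y (hy : 0 < y)
    rw [besselLyapunov, deriv_besselI (by linarith) hy]
    field_simp
  refine Tendsto.congr' heq.symm ?_
  simpa using ((hid.mul hJ).add (hI.const_mul ν)).mul hI |>.sub
    ((hφ.tendsto.mono_left nhdsWithin_le_nhds).mul (hI.pow 2))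

lemma besselLyapunov_turanPhi_pos (hν : 1 / 2 < ν) (hx : 0 < x) :
    0 < besselLyapunov ν (turanPhi ν) x := by
  have hmono := besselLyapunov_turanPhi_strictMonoOn hν
  have hx2 : x / 2 ∈ Ioi (0 : ℝ) := half_pos hx
  have hnonneg : 0 ≤ besselLyapunov ν (turanPhi ν) (x / 2) :=
    le_of_tendsto (tendsto_besselLyapunov_turanPhi hν) <| by
      filter_upwards [Ioo_mem_nhdsGT (half_pos hx)] with y hy
      exact (hmono hy.1 hx2 hy.2).le
  exact hnonneg.trans_lt (hmono hx2 hx (half_lt_self hx))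

lemma turanPhi_mul_besselI_lt (hν : 1 / 2 ≤ ν) (hx : 0 < x) :
    turanPhi ν x * besselI ν x < x * deriv (besselI ν) x := by
  rcases hν.eq_or_lt with rfl | hν
  · have hbelow := (besselLyapunov_pos_iff (by norm_num) hx).mp (besselLyapunov_half_pos hx)
    have habove : -(x - 1 / 2) * besselI (1 / 2) x < x * deriv (besselI (1 / 2)) x := by
      rw [mul_deriv_besselI (by norm_num) hx]
      nlinarith [besselI_pos (ν := 1 / 2) (by norm_num) hx,
        mul_pos hx (besselI_pos (ν := 1 / 2 + 1) (by norm_num) hx)]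
    rw [turanPhi_half hx]
    rcases abs_cases (x - 1 / 2) with ⟨h, -⟩ | ⟨h, -⟩ <;> rw [h] <;> assumption
  · exact (besselLyapunov_pos_iff (by linarith) hx).mp (besselLyapunov_turanPhi_pos hν hx)

theorem turan_besselI_upper_sqrt (ν : ℝ) (hν : 1 / 2 ≤ ν) (x : ℝ) (hx : 0 < x) :
    besselI ν x ^ 2 - besselI (ν - 1) x * besselI (ν + 1) x <
      besselI ν x ^ 2 / Real.sqrt (x ^ 2 + ν ^ 2 - 1 / 4) := by
  have hν0 : 0 < ν := by linarith
  have hφ := turanPhi_sq hν hx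
  have hsq : (turanPhi ν x * besselI ν x) ^ 2 <
      (x * besselI (ν + 1) x + ν * besselI ν x) ^ 2 := by
    rw [← mul_deriv_besselI (by linarith) hx]
    exact pow_lt_pow_left₀ (turanPhi_mul_besselI_lt hν hx)
      (mul_nonneg (Real.sqrt_nonneg _) (besselI_pos (by linarith) hx).le) two_ne_zero
  rw [besselI_sub_one hν0 hx]
  refine lt_of_mul_lt_mul_left ?_ (sq_nonneg x)
  calc x ^ 2 * (besselI ν x ^ 2 -
        (besselI (ν + 1) x + 2 * ν / x * besselI ν x) * besselI (ν + 1) x)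
      = (x ^ 2 + ν ^ 2) * besselI ν x ^ 2 - (x * besselI (ν + 1) x + ν * besselI ν x) ^ 2 := by
        field_simp
        ring
    _ < (x ^ 2 + ν ^ 2) * besselI ν x ^ 2 - (turanPhi ν x * besselI ν x) ^ 2 := by linarith
    _ = x ^ 2 * (besselI ν x ^ 2 / √(x ^ 2 + ν ^ 2 - 1 / 4)) := by
        rw [mul_pow, hφ]
        ring
end

section
/- Let ν be real with |ν| ≥ 1/2 and set μ = ν² − 1/4 ≥ 0. Then for all x > 0 the logarithmic derivative of the modified Bessel function of the second kind satisfies x · K_ν′(x)/K_ν(x) ≤ −√(x² + μ) + √μ − |ν|, where K_ν′ denotes the derivative of K_ν with respect to x. -/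
open Real

/-
With `r = K_{ν-1} / K_ν`, differentiating under the integral and integrating by parts give
`K_ν' = -K_{ν-1} - (ν/x) K_ν`, so the claim is a lower bound for `x r`. The companion recurrence
`K_{ν-1}' = -K_ν + ((ν-1)/x) K_{ν-1}` (from `K_{-ν} = K_ν`) makes `r` a positive solution of the
Riccati equation `r' = r² + ((2ν-1)/x) r - 1` on `(0, ∞)`. For `ν ≥ 1/2` its right-hand side is
nonnegative: once negative, `r` decreases, which keeps the right-hand side below its negative value,
so `r` would eventually become negative. Solving the quadratic inequality gives
`x r ≥ √(x² + (ν-1/2)²) - (ν-1/2)`, and `√(x² + c) - √c` decreases in `c` while `(ν-1/2)² ≤ μ`.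
-/

open MeasureTheory Set Filter Topology

lemma abs_cosh_le_exp_abs (y : ℝ) : |cosh y| ≤ exp |y| := by
  rw [abs_of_pos (cosh_pos y), ← cosh_abs, cosh_eq]
  linarith [exp_le_exp.2 (neg_le_self (abs_nonneg y))]

lemma abs_sinh_le_exp_abs (y : ℝ) : |sinh y| ≤ exp |y| := by
  rw [abs_sinh, sinh_eq]
  linarith [exp_pos (-|y|), exp_pos |y|]

lemma abs_cosh_mul_le (ν : ℝ) {t : ℝ} (ht : 0 < t) : |cosh (ν * t)| ≤ exp (|ν| * t) := by
  simpa [abs_mul, abs_of_pos ht] using abs_cosh_le_exp_abs (ν * t)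

lemma abs_sinh_mul_le (ν : ℝ) {t : ℝ} (ht : 0 < t) : |sinh (ν * t)| ≤ exp (|ν| * t) := by
  simpa [abs_mul, abs_of_pos ht] using abs_sinh_le_exp_abs (ν * t)

lemma abs_mul_le_exp_add_mul {u v a b t : ℝ} (hu : |u| ≤ exp (a * t)) (hv : |v| ≤ exp (b * t)) :
    |u * v| ≤ exp ((a + b) * t) := by
  rw [abs_mul, add_mul, exp_add]
  exact mul_le_mul hu hv (abs_nonneg v) (exp_pos _).le

lemma neg_mul_cosh_add_mul_le {x : ℝ} (hx : 0 < x) (a : ℝ) {t : ℝ} (ht : 0 ≤ t) :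
    -x * cosh t + a * t ≤ (a + 1) ^ 2 / x - t := by
  have hcosh : t ^ 2 / 4 ≤ cosh t := by
    rw [cosh_eq]
    linarith [quadratic_le_exp_of_nonneg ht, exp_pos (-t)]
  have hsq : x * t ^ 2 / 4 - (a + 1) * t + (a + 1) ^ 2 / x = (x * t / 2 - (a + 1)) ^ 2 / x := by
    field_simp
    ring
  have : 0 ≤ (x * t / 2 - (a + 1)) ^ 2 / x := by positivity
  nlinarith

lemma abs_exp_neg_mul_cosh_mul_le {x : ℝ} (hx : 0 < x) (a : ℝ) {t g : ℝ} (ht : 0 ≤ t)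
    (hg : |g| ≤ exp (a * t)) : |exp (-x * cosh t) * g| ≤ exp ((a + 1) ^ 2 / x) * exp (-t) := by
  rw [abs_mul, abs_of_pos (exp_pos _)]
  calc exp (-x * cosh t) * |g| ≤ exp (-x * cosh t) * exp (a * t) := by gcongr
    _ = exp (-x * cosh t + a * t) := (exp_add _ _).symm
    _ ≤ exp ((a + 1) ^ 2 / x - t) := exp_le_exp.2 (neg_mul_cosh_add_mul_le hx a ht)
    _ = exp ((a + 1) ^ 2 / x) * exp (-t) := by rw [sub_eq_add_neg, exp_add]

lemma integrableOn_exp_neg_mul_cosh_mul {x : ℝ} (hx : 0 < x) {g : ℝ → ℝ} (hg : Continuous g)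
    (a : ℝ) (hga : ∀ t, 0 < t → |g t| ≤ exp (a * t)) :
    IntegrableOn (fun t => exp (-x * cosh t) * g t) (Ioi 0) := by
  refine Integrable.mono' ((exp_neg_integrableOn_Ioi 0 one_pos).const_mul (exp ((a + 1) ^ 2 / x)))
    (by fun_prop : Continuous fun t => exp (-x * cosh t) * g t).aestronglyMeasurable ?_
  filter_upwards [ae_restrict_mem measurableSet_Ioi] with t ht
  simpa using abs_exp_neg_mul_cosh_mul_le hx a (le_of_lt ht) (hga t ht)

lemma tendsto_exp_neg_mul_cosh_mul {x : ℝ} (hx : 0 < x) {g : ℝ → ℝ} (a : ℝ)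
    (hga : ∀ t, 0 < t → |g t| ≤ exp (a * t)) :
    Tendsto (fun t => exp (-x * cosh t) * g t) atTop (𝓝 0) := by
  have hdecay : Tendsto (fun t => exp ((a + 1) ^ 2 / x) * exp (-t)) atTop (𝓝 0) := by
    simpa using tendsto_exp_neg_atTop_nhds_zero.const_mul (exp ((a + 1) ^ 2 / x))
  refine squeeze_zero_norm' ?_ hdecay
  filter_upwards [eventually_gt_atTop 0] with t ht
  exact abs_exp_neg_mul_cosh_mul_le hx a ht.le (hga t ht)

lemma riccati_rhs_nonneg {f : ℝ → ℝ} {c : ℝ} (hc : 0 ≤ c) (hf : ∀ y, 0 < y → 0 ≤ f y)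
    (hf' : ∀ y, 0 < y → HasDerivAt f (f y ^ 2 + c / y * f y - 1) y) {x : ℝ} (hx : 0 < x) :
    0 ≤ f x ^ 2 + c / x * f x - 1 := by
  by_contra! hq
  set q := f x ^ 2 + c / x * f x - 1
  have hxX : x ≤ x + 2 * (f x + 1) / -q :=
    le_add_of_nonneg_right (div_nonneg (by linarith [hf x hx]) (by linarith))
  -- `f` stays below the line of slope `q / 2` through `(x, f x)`, which reaches `-1`.
  have hfence := image_le_of_deriv_right_lt_deriv_boundary (f := f)
    (B := fun y => f x + q / 2 * (y - x))
    (fun y hy => (hf' y (hx.trans_le hy.1)).continuousAt.continuousWithinAt)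
    (fun y hy => (hf' y (hx.trans_le hy.1)).hasDerivWithinAt) (by simp)
    (fun y => (((hasDerivAt_id y).sub_const x).const_mul (q / 2)).const_add (f x))
    (fun y hy hfy => by
      have hy₀ : 0 < y := hx.trans_le hy.1
      have hfy_le : f y ≤ f x := by nlinarith [hy.1]
      have : f y ^ 2 + c / y * f y - 1 ≤ q := by
        have hfy_nonneg := hf y hy₀
        calc f y ^ 2 + c / y * f y - 1 ≤ f x ^ 2 + c / x * f x - 1 := by gcongr; exact hy.1
          _ = q := rfl
      simp only [mul_one]
      linarith)
    (right_mem_Icc.2 hxX)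
  have hB : f x + q / 2 * (x + 2 * (f x + 1) / -q - x) = -1 := by
    have := hq.ne
    field_simp
    ring
  linarith [hf _ (hx.trans_le hxX)]

lemma sqrt_add_sub_sqrt_le_of_le {y c d : ℝ} (hy : 0 ≤ y) (hc : 0 ≤ c) (hcd : c ≤ d) :
    √(y + d) - √d ≤ √(y + c) - √c := by
  have hA := sq_sqrt (by linarith : 0 ≤ y + d)
  have hB := sq_sqrt (by linarith : 0 ≤ y + c)
  have hC := sq_sqrt (by linarith : 0 ≤ d)
  have hD := sq_sqrt hc
  have hAC : √d ≤ √(y + d) := sqrt_le_sqrt (by linarith)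
  have hBD : √c ≤ √(y + c) := sqrt_le_sqrt (by linarith)
  have hCD : √c ≤ √d := sqrt_le_sqrt hcd
  nlinarith [sqrt_nonneg c, sqrt_nonneg (y + c)]

lemma integrableOn_besselK_integrand (ν : ℝ) {x : ℝ} (hx : 0 < x) :
    IntegrableOn (fun t => exp (-x * cosh t) * cosh (ν * t)) (Ioi 0) :=
  integrableOn_exp_neg_mul_cosh_mul hx (by fun_prop) |ν| fun _ ht => abs_cosh_mul_le ν ht

lemma integrableOn_exp_neg_mul_cosh_mul_sinh_mul_sinh (ν : ℝ) {x : ℝ} (hx : 0 < x) :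
    IntegrableOn (fun t => exp (-x * cosh t) * (sinh t * sinh (ν * t))) (Ioi 0) :=
  integrableOn_exp_neg_mul_cosh_mul hx (by fun_prop) (1 + |ν|) fun t ht =>
    abs_mul_le_exp_add_mul (by simpa using abs_sinh_mul_le 1 ht) (abs_sinh_mul_le ν ht)

lemma besselK_pos (ν : ℝ) {x : ℝ} (hx : 0 < x) : 0 < besselK ν x := by
  refine (setIntegral_pos_iff_support_of_nonneg_ae
    (ae_of_all _ fun t => by positivity) (integrableOn_besselK_integrand ν hx)).2 ?_
  have hsupp : Function.support (fun t => exp (-x * cosh t) * cosh (ν * t)) = univ :=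
    Function.support_eq_univ fun t => by positivity
  rw [hsupp, univ_inter, Real.volume_Ioi]
  exact ENNReal.zero_lt_top

lemma besselK_neg (ν : ℝ) : besselK (-ν) = besselK ν := by
  funext x
  simp only [besselK, neg_mul ν, cosh_neg]

lemma besselK_abs (ν : ℝ) : besselK |ν| = besselK ν := by
  rcases abs_choice ν with h | h <;> rw [h]
  exact besselK_neg ν

lemma hasDerivAt_besselK_eq_neg_integral (ν : ℝ) {x : ℝ} (hx : 0 < x) :
    HasDerivAt (besselK ν) (-∫ t in Ioi 0, exp (-x * cosh t) * (cosh t * cosh (ν * t))) x := by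
  have hball : Metric.ball x (x / 2) ∈ 𝓝 x := Metric.ball_mem_nhds x (by positivity)
  have hdom := integrableOn_exp_neg_mul_cosh_mul (half_pos hx)
    (by fun_prop : Continuous fun t => cosh t * cosh (ν * t)) (1 + |ν|) fun t ht =>
      abs_mul_le_exp_add_mul (by simpa using abs_cosh_mul_le 1 ht) (abs_cosh_mul_le ν ht)
  have key := hasDerivAt_integral_of_dominated_loc_of_deriv_le (μ := volume.restrict (Ioi 0))
    (F := fun y t => exp (-y * cosh t) * cosh (ν * t))
    (F' := fun y t => -(exp (-y * cosh t) * (cosh t * cosh (ν * t))))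
    (bound := fun t => exp (-(x / 2) * cosh t) * (cosh t * cosh (ν * t))) hball
    (Eventually.of_forall fun y => (by fun_prop : Continuous _).aestronglyMeasurable)
    (integrableOn_besselK_integrand ν hx)
    (by fun_prop : Continuous _).aestronglyMeasurable ?_ hdom ?_
  · have h := key.2
    rw [integral_neg] at h
    exact h
  · refine ae_of_all _ fun t y hy => ?_
    have hy : x / 2 ≤ y := by
      have := (abs_lt.1 (Metric.mem_ball.1 hy)).1
      linarith
    rw [norm_neg, Real.norm_of_nonneg (by positivity)]
    gcongr
  · refine ae_of_all _ fun t y _ => ?_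
    have h := ((hasDerivAt_neg y).mul_const (cosh t)).exp.mul_const (cosh (ν * t))
    exact h.congr_deriv (by ring)

lemma mul_integral_sinh_mul_sinh (ν : ℝ) {x : ℝ} (hx : 0 < x) :
    x * ∫ t in Ioi 0, exp (-x * cosh t) * (sinh t * sinh (ν * t)) = ν * besselK ν x := by
  have hderiv : ∀ t ∈ Ici (0 : ℝ), HasDerivAt (fun t => exp (-x * cosh t) * sinh (ν * t))
      (ν * (exp (-x * cosh t) * cosh (ν * t))
        - x * (exp (-x * cosh t) * (sinh t * sinh (ν * t)))) t := fun t _ => by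
    have h := (((hasDerivAt_cosh t).const_mul (-x)).exp).mul
      (((hasDerivAt_id t).const_mul ν).sinh)
    exact h.congr_deriv (by simp only [id]; ring)
  have hI₁ := integrableOn_besselK_integrand ν hx
  have hI₂ := integrableOn_exp_neg_mul_cosh_mul_sinh_mul_sinh ν hx
  have hboundary := integral_Ioi_of_hasDerivAt_of_tendsto' hderiv
    ((hI₁.const_mul ν).sub (hI₂.const_mul x))
    (tendsto_exp_neg_mul_cosh_mul hx |ν| fun t ht => abs_sinh_mul_le ν ht)
  rw [integral_sub (hI₁.const_mul ν) (hI₂.const_mul x), integral_const_mul,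
    integral_const_mul] at hboundary
  simp only [mul_zero, sinh_zero, sub_zero] at hboundary
  exact (sub_eq_zero.1 hboundary).symm

theorem hasDerivAt_besselK (ν : ℝ) {x : ℝ} (hx : 0 < x) :
    HasDerivAt (besselK ν) (-besselK (ν - 1) x - ν / x * besselK ν x) x := by
  refine (hasDerivAt_besselK_eq_neg_integral ν hx).congr_deriv ?_
  have hsplit : ∀ t, exp (-x * cosh t) * (cosh t * cosh (ν * t)) = exp (-x * cosh t) *
      cosh ((ν - 1) * t) + exp (-x * cosh t) * (sinh t * sinh (ν * t)) := fun t => by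
    rw [sub_mul, one_mul, cosh_sub]
    ring
  have hI₂ := integrableOn_exp_neg_mul_cosh_mul_sinh_mul_sinh ν hx
  have hI : ∫ t in Ioi 0, exp (-x * cosh t) * (sinh t * sinh (ν * t)) = ν / x * besselK ν x := by
    rw [div_mul_eq_mul_div, eq_div_iff hx.ne', mul_comm, mul_integral_sinh_mul_sinh ν hx]
  rw [setIntegral_congr_fun measurableSet_Ioi fun t _ => hsplit t,
    integral_add (integrableOn_besselK_integrand (ν - 1) hx) hI₂, hI, neg_add, ← sub_eq_add_neg]
  rfl

theorem hasDerivAt_besselK' (ν : ℝ) {x : ℝ} (hx : 0 < x) :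
    HasDerivAt (besselK ν) (-besselK (ν + 1) x + ν / x * besselK ν x) x := by
  have h := hasDerivAt_besselK (-ν) hx
  rw [besselK_neg, show -ν - 1 = -(ν + 1) by ring, besselK_neg] at h
  exact h.congr_deriv (by ring)

lemma hasDerivAt_besselK_div (ν : ℝ) {x : ℝ} (hx : 0 < x) :
    HasDerivAt (fun y => besselK (ν - 1) y / besselK ν y)
      ((besselK (ν - 1) x / besselK ν x) ^ 2
        + (2 * ν - 1) / x * (besselK (ν - 1) x / besselK ν x) - 1) x := by
  have h₁ := hasDerivAt_besselK' (ν - 1) hx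
  rw [sub_add_cancel] at h₁
  have hK := (besselK_pos ν hx).ne'
  refine (h₁.div (hasDerivAt_besselK ν hx) hK).congr_deriv ?_
  field_simp
  ring

theorem sqrt_sq_add_sq_sub_le_mul_besselK_div {ν x : ℝ} (hν : 1 / 2 ≤ ν) (hx : 0 < x) :
    √(x ^ 2 + (ν - 1 / 2) ^ 2) - (ν - 1 / 2) ≤ x * (besselK (ν - 1) x / besselK ν x) := by
  have hratio : ∀ y, 0 < y → 0 ≤ besselK (ν - 1) y / besselK ν y := fun y hy =>
    (div_pos (besselK_pos _ hy) (besselK_pos ν hy)).le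
  have hriccati := riccati_rhs_nonneg (by linarith) hratio
    (fun y hy => hasDerivAt_besselK_div ν hy) hx
  set r := besselK (ν - 1) x / besselK ν x
  have hr := hratio x hx
  have hquad : x ^ 2 + (ν - 1 / 2) ^ 2 ≤ (x * r + (ν - 1 / 2)) ^ 2 := by
    have h := mul_nonneg (sq_nonneg x) hriccati
    have : x ^ 2 * ((2 * ν - 1) / x * r) = (2 * ν - 1) * x * r := by field_simp
    nlinarith
  have := sqrt_le_sqrt hquad
  rw [sqrt_sq (by positivity)] at this
  linarith

theorem besselK_logDeriv_upper (ν : ℝ) (hν : 1 / 2 ≤ |ν|) (μ : ℝ)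
    (hμ : μ = ν ^ 2 - 1 / 4) (x : ℝ) (hx : 0 < x) :
    x * deriv (besselK ν) x / besselK ν x ≤
      -Real.sqrt (x ^ 2 + μ) + Real.sqrt μ - |ν| := by
  rw [← besselK_abs ν, (hasDerivAt_besselK |ν| hx).deriv]
  have hratio := sqrt_sq_add_sq_sub_le_mul_besselK_div hν hx
  have hμν : (|ν| - 1 / 2) ^ 2 ≤ μ := by
    rw [hμ, ← sq_abs ν]
    nlinarith
  have hsqrt := sqrt_add_sub_sqrt_le_of_le (sq_nonneg x) (sq_nonneg (|ν| - 1 / 2)) hμν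
  rw [sqrt_sq (by linarith)] at hsqrt
  have hK := (besselK_pos |ν| hx).ne'
  calc x * (-besselK (|ν| - 1) x - |ν| / x * besselK |ν| x) / besselK |ν| x
      = -(x * (besselK (|ν| - 1) x / besselK |ν| x)) - |ν| := by field_simp
    _ ≤ -√(x ^ 2 + μ) + √μ - |ν| := by linarith
end
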